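/- Fix m ≥ 1 and formal variables x_0, …, x_m, and for each i ≥ 1 let F^i(x_0, …, x_m, t) = f_{x_0 + x_1 t + ⋯ + x_m t^m}^i(t) ∈ ℚ[x_0, …, x_m, t]. Let N be a natural number with N ≥ m+2 and let G ∈ ℚ[x_0, …, x_m, t]. Then G divides F^i for every i with N+1 ≤ i ≤ 2N−1 if and only if G divides F^i for every i ≥ N+1. -/

import Mathlib

/- Idea: once `s` vanishes from index `N - 1` on, the recursion for `f^{k+2}` with `k + 2 ≥ 2N`
only involves products in which one factor is some `f^j` with `N < j < k + 2`, except for the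
single term `j = N - 1, k + 2 = 2N`, whose integer coefficient `2j + 1 - (k + 1)` is zero.
So membership in an ideal propagates from `f^{N+1}, …, f^{2N-1}` to all later `f^i`. -/

open Polynomial in
/-- The sequence of polynomials `f_S^i` associated to a coefficient sequence `s`. -/
noncomputable def fseq {R : Type*} [CommRing R] [Algebra ℚ R] (s : ℕ → R) : ℕ → Polynomial R
  | 0 => 0
  | 1 => C (s 0)
  | (k+2) =>
      ((((k : ℚ)+2)^2)⁻¹) •
        (C (s (k+1)) + Polynomial.X *
          ∑ i ∈ (Finset.range (k+1)).attach,
            (C (s i.1) - ((((i.1 : ℤ))+1) * (2*(i.1 : ℤ)+1-((k : ℤ)+1))) • fseq s (i.1+1) ) *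
              fseq s (k+1-i.1))
  termination_by k => k
  decreasing_by
  all_goals (first
    | omega
    | (have h := i.2; rw [Finset.mem_range] at h; omega))

/-- The polynomials `F^i(x_0,…,x_m,t) = f_{x_0 + x_1 t + ⋯ + x_m t^m}^i(t)`, regarded as
elements of `ℚ[x_0,…,x_m][t]`. -/
noncomputable def Fpoly (m : ℕ) (i : ℕ) : Polynomial (MvPolynomial (Fin (m + 1)) ℚ) :=
  fseq (fun j => if h : j < m + 1 then MvPolynomial.X (⟨j, h⟩ : Fin (m + 1)) else 0) i


open Polynomial

variable {R : Type*} [CommRing R] [Algebra ℚ R] {s : ℕ → R} {I : Ideal R[X]} {N : ℕ}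

theorem fseq_add_two_mem (hs : ∀ j, N ≤ j + 1 → s j = 0) {k : ℕ} (hk : 2 * N ≤ k + 2)
    (ih : ∀ j, N + 1 ≤ j → j < k + 2 → fseq s j ∈ I) : fseq s (k + 2) ∈ I := by
  rw [fseq, hs (k + 1) (by omega), map_zero, zero_add]
  refine Submodule.smul_of_tower_mem _ _ (I.mul_mem_left _ (I.sum_mem fun ⟨j, hj⟩ _ => ?_))
  rw [Finset.mem_range] at hj
  by_cases hjN : N ≤ j
  · refine I.mul_mem_right _ ?_
    rw [hs j (by omega), map_zero, zero_sub]
    exact I.neg_mem (Submodule.smul_of_tower_mem _ _ (ih (j + 1) (by omega) (by omega)))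
  by_cases hkj : N + 1 ≤ k + 1 - j
  · exact I.mul_mem_left _ (ih (k + 1 - j) hkj (by omega))
  have hcoeff : 2 * (j : ℤ) + 1 - ((k : ℤ) + 1) = 0 := by omega
  simp [hs j (by omega), hcoeff]

theorem fseq_mem_of_mem_of_lt_two_mul (hs : ∀ j, N ≤ j + 1 → s j = 0)
    (h : ∀ i, N + 1 ≤ i → i < 2 * N → fseq s i ∈ I) : ∀ i, N + 1 ≤ i → fseq s i ∈ I := by
  intro i
  induction i using Nat.strong_induction_on with
  | _ i ih =>
    intro hi
    rcases lt_or_ge i (2 * N) with hlt | hge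
    · exact h i hi hlt
    rcases i with _ | _ | k
    · omega
    · simp [fseq, hs 0 (by omega)]
    · exact fseq_add_two_mem hs hge fun j hj hjk => ih j hjk hj

theorem stmt7_general (m : ℕ) (N : ℕ) (hN : m + 2 ≤ N)
    (G : Polynomial (MvPolynomial (Fin (m + 1)) ℚ)) :
    (∀ i : ℕ, N + 1 ≤ i → i ≤ 2 * N - 1 → G ∣ Fpoly m i) ↔
      (∀ i : ℕ, N + 1 ≤ i → G ∣ Fpoly m i) := by
  simp only [Fpoly, ← Ideal.mem_span_singleton]
  refine ⟨fun h => fseq_mem_of_mem_of_lt_two_mul (fun j hj => dif_neg (by omega))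
    fun i hi hlt => h i hi (by omega), fun h i hi _ => h i hi⟩

/-- Fix `m ≥ 1` and `N ≥ m+2`, and let `G ∈ ℚ[x_0,…,x_m,t]`.
Then `G` divides `F^i` for every `N+1 ≤ i ≤ 2N−1` if and only if `G` divides `F^i`
for every `i ≥ N+1`. -/
theorem stmt7 (m : ℕ) (hm : 1 ≤ m) (N : ℕ) (hN : m + 2 ≤ N)
    (G : Polynomial (MvPolynomial (Fin (m + 1)) ℚ)) :
    (∀ i : ℕ, N + 1 ≤ i → i ≤ 2 * N - 1 → G ∣ Fpoly m i) ↔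
      (∀ i : ℕ, N + 1 ≤ i → G ∣ Fpoly m i) :=
  stmt7_general m N hN G
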